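/- Counterexample showing the chained estimator is biased: Define F : 2^{{1,2}} → ℝ by F(∅)=0, F({1})=-1/2, F({2})=0, F({1,2})=-1. Then F is submodular, its Lovász subgradient satisfies g(x₁,x₂) = (-1/2,-1/2) if x₁ ≥ x₂ and (-1,0) if x₁ < x₂; starting from x⁽⁰⁾=(0,0) with step 0 < η < 1, if g̃⁽⁰⁾=(0,-1) (a realization of the 1-sparse unbiased estimator of g(x⁽⁰⁾)) and x⁽¹⁾=(0,η), then for any random variable d̃ with E[d̃ | x⁽¹⁾] = g(x⁽¹⁾) - g(x⁽⁰⁾), the estimator g̃⁽¹⁾ = g̃⁽⁰⁾ + d̃ satisfies E[g̃⁽¹⁾ | x⁽¹⁾] = (-1/2,-1/2) ≠ (-1,0) = g(x⁽¹⁾). -/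

import Mathlib

/-! The step to `x⁽¹⁾ = (0,η)` crosses the diagonal `x₁ = x₂`, where the piecewise constant
subgradient jumps, and `E[d̃]` only corrects the mean `g(x⁽⁰⁾)`. Adding `d̃` to the
realization `g̃⁽⁰⁾ = (0,-1)` instead of to that mean shifts the expectation by
`g̃⁽⁰⁾ - g(x⁽⁰⁾) = (1/2,-1/2) ≠ 0`: the estimator carries the noise of the first step forward. -/

open MeasureTheory Finset

/-- A set function on subsets of `Fin 2` is submodular (diminishing returns). -/
def Submodular (F : Finset (Fin 2) → ℝ) : Prop :=
  ∀ ⦃A B : Finset (Fin 2)⦄, A ⊆ B → ∀ i ∉ B,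
    F (insert i A) - F A ≥ F (insert i B) - F B

theorem submodular_of_add_le_add {F : Finset (Fin 2) → ℝ}
    (h : F {0, 1} + F ∅ ≤ F {0} + F {1}) : Submodular F := by
  intro A B hAB i hiB
  rcases hAB.eq_or_ssubset with rfl | hlt
  · exact le_rfl
  have hB : #B ≤ 1 := by
    simpa using card_le_card (subset_erase.2 ⟨subset_univ B, hiB⟩)
  have hA : #A < #B := card_lt_card hlt
  obtain ⟨j, rfl⟩ := card_eq_one.1 (show #B = 1 by omega)
  obtain rfl : A = ∅ := card_eq_zero.1 (by simpa using hA)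
  have hij : i ≠ j := by simpa using hiB
  fin_cases i <;> fin_cases j <;> simp_all [pair_comm] <;> linarith

theorem integral_const_add {Ω : Type*} [MeasurableSpace Ω] {μ : Measure Ω}
    [IsProbabilityMeasure μ] {f : Ω → ℝ} (hf : Integrable f μ) (c : ℝ) :
    ∫ ω, (c + f ω) ∂μ = c + ∫ ω, f ω ∂μ := by
  rw [integral_add (integrable_const c) hf, integral_const, probReal_univ, one_smul]

theorem chained_estimator_biased_counterexample_general (F : Finset (Fin 2) → ℝ)
    (h0 : F ∅ = 0) (h1 : F {0} = -1/2) (h2 : F {1} = 0) (h12 : F {0, 1} = -1)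
    (g : (Fin 2 → ℝ) → Fin 2 → ℝ)
    (hg : ∀ x : Fin 2 → ℝ, g x =
      if x 1 ≤ x 0 then ![F {0} - F ∅, F {0, 1} - F {0}]
      else ![F {0, 1} - F {1}, F {1} - F ∅])
    (η : ℝ) (hη0 : 0 < η) :
    Submodular F ∧
    g (fun _ => 0) = ![-1/2, -1/2] ∧
    g ![0, η] = ![-1, 0] ∧
    ∀ (Ω : Type) (_ : MeasurableSpace Ω) (μ : Measure Ω),
      IsProbabilityMeasure μ →
      ∀ d : Ω → Fin 2 → ℝ, (∀ i, Integrable (fun ω => d ω i) μ) →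
      (∀ i, ∫ ω, d ω i ∂μ = g ![0, η] i - g (fun _ => 0) i) →
      ((fun i => ∫ ω, (![(0 : ℝ), -1] i + d ω i) ∂μ) = ![-1/2, -1/2] ∧
        (![-1/2, -1/2] : Fin 2 → ℝ) ≠ g ![0, η]) := by
  have hg₀ : g (fun _ => 0) = ![-1/2, -1/2] := by
    rw [hg, if_pos le_rfl, h0, h1, h12]
    norm_num
  have hg₁ : g ![0, η] = ![-1, 0] := by
    rw [hg, if_neg (by simpa using hη0), h0, h2, h12]
    norm_num
  refine ⟨submodular_of_add_le_add (by linarith), hg₀, hg₁,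
    fun Ω _ μ _ d hd hmean => ⟨funext fun i => ?_, ?_⟩⟩
  · rw [integral_const_add (hd i), hmean, hg₀, hg₁]
    fin_cases i <;> norm_num
  · rw [hg₁]
    intro h
    norm_num at h

/-- **Counterexample showing the chained estimator is biased.** With
`F(∅)=0, F({1})=-1/2, F({2})=0, F({1,2})=-1`, the function `F` is submodular, its
Lovász subgradient is `(-1/2,-1/2)` for `x₁ ≥ x₂` and `(-1,0)` otherwise; starting
at `x⁽⁰⁾ = (0,0)` with realization `g̃⁽⁰⁾ = (0,-1)` and `x⁽¹⁾ = (0,η)`, any `d̃` with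
`E[d̃ | x⁽¹⁾] = g(x⁽¹⁾) - g(x⁽⁰⁾)` yields `E[g̃⁽⁰⁾ + d̃ | x⁽¹⁾] = (-1/2,-1/2) ≠ g(x⁽¹⁾)`. -/
theorem chained_estimator_biased_counterexample (F : Finset (Fin 2) → ℝ)
    (h0 : F ∅ = 0) (h1 : F {0} = -1/2) (h2 : F {1} = 0) (h12 : F {0, 1} = -1)
    (g : (Fin 2 → ℝ) → Fin 2 → ℝ)
    (hg : ∀ x : Fin 2 → ℝ, g x =
      if x 1 ≤ x 0 then ![F {0} - F ∅, F {0, 1} - F {0}]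
      else ![F {0, 1} - F {1}, F {1} - F ∅])
    (η : ℝ) (hη0 : 0 < η) (hη1 : η < 1) :
    Submodular F ∧
    g (fun _ => 0) = ![-1/2, -1/2] ∧
    g ![0, η] = ![-1, 0] ∧
    ∀ (Ω : Type) (_ : MeasurableSpace Ω) (μ : Measure Ω),
      IsProbabilityMeasure μ →
      ∀ d : Ω → Fin 2 → ℝ, (∀ i, Integrable (fun ω => d ω i) μ) →
      (∀ i, ∫ ω, d ω i ∂μ = g ![0, η] i - g (fun _ => 0) i) →
      ((fun i => ∫ ω, (![(0 : ℝ), -1] i + d ω i) ∂μ) = ![-1/2, -1/2] ∧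
        (![-1/2, -1/2] : Fin 2 → ℝ) ≠ g ![0, η]) :=
  chained_estimator_biased_counterexample_general F h0 h1 h2 h12 g hg η hη0
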